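/- arXiv:1408.3380 — 4 statements merged into one kernel-verified Lean document; each statement's English description precedes it below -/
import Mathlib

section
/- Let G be a 2-tough graph with independent set D such that every vertex of D has all its neighbors in a set Q = V(G) \ D, and |V(G)| ≥ 3. Then there exists a set of edges E' of G such that every vertex of D is incident to exactly two edges of E', every vertex of Q is incident to at most one edge of E', and every edge of E' joins D to Q. -/
/-- `G` is `β`-tough. -/
def Tough {V : Type*} (G : SimpleGraph V) (β : ℝ) : Prop :=
  ∀ S : Set V, 1 < Nat.card ((G.induce Sᶜ).ConnectedComponent) →
    β * (Nat.card ((G.induce Sᶜ).ConnectedComponent) : ℝ) ≤ (Nat.card S : ℝ)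

/-- A vertex with no neighbours can reach only itself. -/
lemma isolated_reachable_eq {W : Type*} {H : SimpleGraph W} {v w : W}
    (hiso : ∀ x, ¬ H.Adj v x) (h : H.Reachable v w) : v = w := by
  obtain ⟨p⟩ := h
  cases p with
  | nil => rfl
  | cons h' _ => exact absurd h' (hiso _)

/-- The Hall-type neighbourhood bound coming from 2-toughness. -/
lemma key_lemma {V : Type*} [Fintype V] [DecidableEq V] (G : SimpleGraph V)
    [DecidableRel G.Adj] (htough : Tough G 2) (D : Finset V)
    (hnbr : ∀ u ∈ D, ∀ v, G.Adj u v → v ∉ D)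
    (hcard : 3 ≤ Fintype.card V) (D0 : Finset V) (hD0 : D0 ⊆ D) :
    2 * D0.card ≤ (D0.biUnion (fun d => G.neighborFinset d)).card := by
  classical
  set N0 : Finset V := D0.biUnion (fun d => G.neighborFinset d) with hN0
  set S : Set V := (↑N0 : Set V) with hS
  -- vertices of D0 lie outside S
  have hmemc : ∀ d ∈ D0, (d : V) ∈ Sᶜ := by
    intro d hd hdS
    have hmem : d ∈ N0 := hdS
    rw [hN0, Finset.mem_biUnion] at hmem
    obtain ⟨d', hd', hadj⟩ := hmem
    rw [SimpleGraph.mem_neighborFinset] at hadj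
    exact hnbr d' (hD0 hd') d hadj (hD0 hd)
  -- vertices of D0 are isolated in the induced graph on Sᶜ
  have hiso : ∀ d (hd : d ∈ D0) (hdc : (d : V) ∈ Sᶜ),
      ∀ x : (Sᶜ : Set V), ¬ (G.induce Sᶜ).Adj ⟨d, hdc⟩ x := by
    intro d hd hdc x hadj
    have hGadj : G.Adj d (x : V) := hadj
    have hxS : (x : V) ∈ S := by
      have : (x : V) ∈ N0 := by
        rw [hN0, Finset.mem_biUnion]
        exact ⟨d, hd, by rwa [SimpleGraph.mem_neighborFinset]⟩
      exact this
    exact x.2 hxS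
  -- hence distinct vertices of D0 lie in distinct components
  have hφinj : Function.Injective
      (fun d : {x // x ∈ D0} =>
        (G.induce Sᶜ).connectedComponentMk ⟨(d : V), hmemc d d.2⟩) := by
    intro a b hab
    have hreach : (G.induce Sᶜ).Reachable ⟨(a : V), hmemc a a.2⟩ ⟨(b : V), hmemc b b.2⟩ :=
      SimpleGraph.ConnectedComponent.exact hab
    have h1 := isolated_reachable_eq (hiso a a.2 (hmemc a a.2)) hreach
    have h2 := congrArg Subtype.val h1
    exact Subtype.ext h2
  have hΩge : D0.card ≤ Nat.card ((G.induce Sᶜ).ConnectedComponent) := by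
    have := Nat.card_le_card_of_injective _ hφinj
    simpa [Nat.card_eq_fintype_card] using this
  have hScard : Nat.card S = N0.card := by
    rw [hS, Nat.card_coe_set_eq, Set.ncard_coe_finset]
  by_cases hΩ : 1 < Nat.card ((G.induce Sᶜ).ConnectedComponent)
  · have h2 := htough S hΩ
    have h2' : 2 * (Nat.card ((G.induce Sᶜ).ConnectedComponent)) ≤ Nat.card S := by
      exact_mod_cast h2
    calc 2 * D0.card ≤ 2 * Nat.card ((G.induce Sᶜ).ConnectedComponent) := by omega
      _ ≤ Nat.card S := h2'
      _ = N0.card := hScard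
  · -- few components: D0 has at most one vertex
    push_neg at hΩ
    have hD0le : D0.card ≤ 1 := le_trans hΩge hΩ
    rcases Nat.le_one_iff_eq_zero_or_eq_one.mp hD0le with h0 | h1
    · simp [h0]
    · -- D0 = {d}; show Sᶜ ⊆ {d}, so |S| ≥ |V| - 1 ≥ 2
      obtain ⟨d, hd⟩ := Finset.card_eq_one.mp h1
      have hdD0 : d ∈ D0 := by simp [hd]
      have hdc := hmemc d hdD0
      haveI : Nonempty ((G.induce Sᶜ).ConnectedComponent) :=
        ⟨(G.induce Sᶜ).connectedComponentMk ⟨d, hdc⟩⟩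
      haveI : Finite ((G.induce Sᶜ).ConnectedComponent) := Quot.finite _
      have hone : Nat.card ((G.induce Sᶜ).ConnectedComponent) = 1 := by
        have := Nat.card_pos (α := (G.induce Sᶜ).ConnectedComponent)
        omega
      have hsing : Subsingleton ((G.induce Sᶜ).ConnectedComponent) :=
        (Nat.card_eq_one_iff_unique.mp hone).1
      have hsub : Sᶜ ⊆ {d} := by
        intro x hx
        have heq : (G.induce Sᶜ).connectedComponentMk ⟨d, hdc⟩ =
            (G.induce Sᶜ).connectedComponentMk ⟨x, hx⟩ := Subsingleton.elim _ _
        have hreach := SimpleGraph.ConnectedComponent.exact heq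
        have h1' := isolated_reachable_eq (hiso d hdD0 hdc) hreach
        have hdx := congrArg Subtype.val h1'
        simp only [Set.mem_singleton_iff]
        exact hdx.symm
      -- so the Finset complement of N0 is contained in {d}
      have hsubF : N0ᶜ ⊆ ({d} : Finset V) := by
        intro x hx
        have hxS : x ∈ Sᶜ := by
          simp only [hS, Set.mem_compl_iff, Finset.mem_coe]
          exact Finset.mem_compl.mp hx
        simpa using hsub hxS
      have hcompl : N0ᶜ.card ≤ 1 := by
        simpa using Finset.card_le_card hsubF
      have hNcard : Fintype.card V - 1 ≤ N0.card := by
        have := Finset.card_compl N0 (α := V)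
        omega
      have h2N : 2 ≤ N0.card := by omega
      simpa [h1] using h2N

/-- In a 2-tough graph `G` with independent set `D` (all neighbours of `D`
lie in `Q = V \ D`) on at least 3 vertices, there is an edge set `E'` such that
every vertex of `D` is incident to exactly two edges of `E'`, every vertex
outside `D` to at most one, and every edge of `E'` joins `D` to its
complement. -/
theorem stmt_6 {V : Type*} [Fintype V] [DecidableEq V] (G : SimpleGraph V)
    (htough : Tough G 2) (D : Finset V)
    (hind : ∀ u ∈ D, ∀ v ∈ D, ¬ G.Adj u v)
    (hnbr : ∀ u ∈ D, ∀ v, G.Adj u v → v ∉ D)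
    (hcard : 3 ≤ Fintype.card V) :
    ∃ E' : Finset (Sym2 V), ↑E' ⊆ G.edgeSet ∧
      (∀ v ∈ D, (E'.filter (fun e => v ∈ e)).card = 2) ∧
      (∀ v, v ∉ D → (E'.filter (fun e => v ∈ e)).card ≤ 1) ∧
      (∀ e ∈ E', ∃ u ∈ D, ∃ w, w ∉ D ∧ e = s(u, w)) := by
  classical
  letI : DecidableRel G.Adj := Classical.decRel _
  have key := key_lemma G htough D hnbr hcard
  -- Hall's theorem for the doubled index type
  have hall : ∀ s : Finset ({x // x ∈ D} × Fin 2),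
      s.card ≤ (s.biUnion (fun p => G.neighborFinset (p.1 : V))).card := by
    intro s
    set D0 : Finset V := s.image (fun p => ((p.1 : V))) with hD0
    have hD0sub : D0 ⊆ D := by
      intro x hx
      simp only [hD0, Finset.mem_image] at hx
      obtain ⟨p, _, rfl⟩ := hx
      exact p.1.2
    have hbi : s.biUnion (fun p => G.neighborFinset (p.1 : V)) =
        D0.biUnion (fun d => G.neighborFinset d) := by
      ext x
      simp only [Finset.mem_biUnion, hD0, Finset.mem_image]
      constructor
      · rintro ⟨p, hp, hx⟩; exact ⟨(p.1 : V), ⟨p, hp, rfl⟩, hx⟩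
      · rintro ⟨d, ⟨p, hp, rfl⟩, hx⟩; exact ⟨p, hp, hx⟩
    have hsle : s.card ≤ 2 * D0.card := by
      have hinj : Set.InjOn (fun p : {x // x ∈ D} × Fin 2 => (((p.1 : V)), p.2)) s := by
        intro a _ b _ hab
        simp only [Prod.mk.injEq] at hab
        exact Prod.ext (Subtype.ext hab.1) hab.2
      have hmaps : ∀ p ∈ s, (((p.1 : V)), p.2) ∈ D0 ×ˢ (Finset.univ : Finset (Fin 2)) := by
        intro p hp
        simp only [Finset.mem_product, Finset.mem_univ, and_true, hD0, Finset.mem_image]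
        exact ⟨p, hp, rfl⟩
      have := Finset.card_le_card_of_injOn _ hmaps hinj
      simpa [Finset.card_product, mul_comm] using this
    calc s.card ≤ 2 * D0.card := hsle
      _ ≤ (D0.biUnion (fun d => G.neighborFinset d)).card := key D0 hD0sub
      _ = (s.biUnion (fun p => G.neighborFinset (p.1 : V))).card := by rw [hbi]
  obtain ⟨f, hfinj, hft⟩ :=
    (Finset.all_card_le_biUnion_card_iff_exists_injective
      (fun p : {x // x ∈ D} × Fin 2 => G.neighborFinset (p.1 : V))).mp hall
  have hfadj : ∀ p : {x // x ∈ D} × Fin 2, G.Adj (p.1 : V) (f p) := by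
    intro p
    have := hft p
    rwa [SimpleGraph.mem_neighborFinset] at this
  have hfD : ∀ p : {x // x ∈ D} × Fin 2, f p ∉ D := fun p => hnbr _ p.1.2 _ (hfadj p)
  have hfne : ∀ p : {x // x ∈ D} × Fin 2, f p ≠ (p.1 : V) :=
    fun p => fun h => hfD p (h ▸ p.1.2)
  -- construct the edge set
  refine ⟨Finset.univ.image (fun p : {x // x ∈ D} × Fin 2 => s((p.1 : V), f p)),
    ?_, ?_, ?_, ?_⟩
  · intro e he
    simp only [Finset.coe_image, Set.mem_image, Finset.mem_coe, Finset.coe_univ,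
      Set.image_univ, Set.mem_range] at he
    obtain ⟨p, rfl⟩ := he
    exact (hfadj p)
  · -- every vertex of D is in exactly two edges
    intro v hv
    have hset : (Finset.univ.image
          (fun p : {x // x ∈ D} × Fin 2 => s((p.1 : V), f p))).filter (fun e => v ∈ e) =
        {s(v, f (⟨v, hv⟩, 0)), s(v, f (⟨v, hv⟩, 1))} := by
      ext e
      simp only [Finset.mem_filter, Finset.mem_image, Finset.mem_univ, true_and,
        Finset.mem_insert, Finset.mem_singleton]
      constructor
      · rintro ⟨⟨p, rfl⟩, hve⟩
        rw [Sym2.mem_iff] at hve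
        have hvp : v = (p.1 : V) := by
          rcases hve with h | h
          · exact h
          · exact absurd (h ▸ hv) (hfD p)
        obtain ⟨p1, p2⟩ := p
        have hp1 : p1 = ⟨v, hv⟩ := Subtype.ext hvp.symm
        subst hp1
        fin_cases p2
        · left; rfl
        · right; rfl
      · rintro (rfl | rfl)
        · exact ⟨⟨(⟨v, hv⟩, 0), rfl⟩, by simp⟩
        · exact ⟨⟨(⟨v, hv⟩, 1), rfl⟩, by simp⟩
    rw [hset]
    have hne2 : f (⟨v, hv⟩, 0) ≠ f (⟨v, hv⟩, 1) := by
      intro h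
      have := hfinj h
      simp at this
    have hedne : s(v, f (⟨v, hv⟩, 0)) ≠ s(v, f (⟨v, hv⟩, 1)) := by
      intro h
      rw [Sym2.eq_iff] at h
      rcases h with ⟨_, h⟩ | ⟨h1, h2⟩
      · exact hne2 h
      · exact hfne (⟨v, hv⟩, 1) h1.symm
    rw [Finset.card_insert_of_notMem (by simpa using hedne), Finset.card_singleton]
  · -- every vertex outside D is in at most one edge
    intro v hvD
    rw [Finset.card_le_one]
    intro e1 he1 e2 he2
    simp only [Finset.mem_filter, Finset.mem_image, Finset.mem_univ, true_and] at he1 he2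
    obtain ⟨⟨p1, rfl⟩, hv1⟩ := he1
    obtain ⟨⟨p2, rfl⟩, hv2⟩ := he2
    rw [Sym2.mem_iff] at hv1 hv2
    have h1 : v = f p1 := by
      rcases hv1 with h | h
      · exact absurd (h ▸ p1.1.2) hvD
      · exact h
    have h2 : v = f p2 := by
      rcases hv2 with h | h
      · exact absurd (h ▸ p2.1.2) hvD
      · exact h
    have : p1 = p2 := hfinj (h1 ▸ h2)
    rw [this]
  · intro e he
    simp only [Finset.mem_image, Finset.mem_univ, true_and] at he
    obtain ⟨p, rfl⟩ := he
    exact ⟨(p.1 : V), p.1.2, f p, hfD p, rfl⟩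
end

section
/- Let D be a family of finite sets indexed by a finite set I such that for every subset J ⊆ I, the union of the sets indexed by J has size at least 2|J|. Then one can choose for each index i a 2-element subset T_i of D_i such that the sets T_i are pairwise disjoint. -/
/-!
Split every index `i` into `n` copies `(i, k)`, each demanding an element of `D i`.
A set of copies involves at least `1/n` as many indices, so the `n`-fold Hall condition
for `D` implies Hall's condition for the split family, and Hall's marriage theorem gives an injective choice of representatives for the copies;
the representatives of the `n` copies of `i` form the set `T i`.
-/

open Finset Function

theorem Finset.card_le_mul_card_image_fst {ι : Type*} [DecidableEq ι] {n : ℕ}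
    (s : Finset (ι × Fin n)) : #s ≤ n * #(s.image Prod.fst) :=
  calc #s ≤ #(s.image Prod.fst ×ˢ (univ : Finset (Fin n))) :=
        card_le_card fun p hp => mem_product.2 ⟨mem_image_of_mem _ hp, mem_univ _⟩
    _ = n * #(s.image Prod.fst) := by rw [card_product, card_univ, Fintype.card_fin, mul_comm]

theorem Finset.exists_injective_of_mul_card_le_card_biUnion {ι α : Type*} [DecidableEq α]
    (D : ι → Finset α) (n : ℕ) (hHall : ∀ J : Finset ι, n * #J ≤ #(J.biUnion D)) :
    ∃ f : ι × Fin n → α, Injective f ∧ ∀ p, f p ∈ D p.1 := by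
  classical
  refine (all_card_le_biUnion_card_iff_exists_injective fun p : ι × Fin n => D p.1).1
    fun s => ?_
  calc #s ≤ n * #(s.image Prod.fst) := card_le_mul_card_image_fst s
    _ ≤ #((s.image Prod.fst).biUnion D) := hHall _
    _ = #(s.biUnion fun p => D p.1) := by rw [image_biUnion]

theorem Finset.exists_pairwise_disjoint_subset_card_eq_of_mul_card_le_card_biUnion
    {ι α : Type*} [DecidableEq α] (D : ι → Finset α) (n : ℕ)
    (hHall : ∀ J : Finset ι, n * #J ≤ #(J.biUnion D)) :
    ∃ T : ι → Finset α, (∀ i, T i ⊆ D i ∧ #(T i) = n) ∧ Pairwise (Disjoint on T) := by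
  obtain ⟨f, hf, hfD⟩ := exists_injective_of_mul_card_le_card_biUnion D n hHall
  refine ⟨fun i => univ.image fun k => f (i, k), fun i => ⟨?_, ?_⟩, fun i j hij => ?_⟩
  · simpa only [image_subset_iff] using fun k _ => hfD (i, k)
  · rw [card_image_of_injective _ fun k l h => congrArg Prod.snd (hf h), card_univ,
      Fintype.card_fin]
  · simp only [disjoint_left, mem_image, not_exists, not_and]
    rintro _ ⟨k, -, rfl⟩ l - h
    exact hij (congrArg Prod.fst (hf h)).symm

theorem stmt_7_general {ι α : Type*} [DecidableEq α]
    (D : ι → Finset α)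
    (hHall : ∀ J : Finset ι, 2 * J.card ≤ (J.biUnion D).card) :
    ∃ T : ι → Finset α,
      (∀ i, T i ⊆ D i ∧ (T i).card = 2) ∧
      (∀ i j, i ≠ j → Disjoint (T i) (T j)) := by
  obtain ⟨T, hTD, hT⟩ :=
    exists_pairwise_disjoint_subset_card_eq_of_mul_card_le_card_biUnion D 2 hHall
  exact ⟨T, hTD, fun i j hij => hT hij⟩

/-- Polygamous Hall theorem: if every subfamily `J` of a finite family of finite
sets covers at least `2|J|` elements, then one can pick pairwise disjoint
2-element subsets `T i ⊆ D i`. -/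
theorem stmt_7 {ι α : Type*} [Fintype ι] [DecidableEq ι] [DecidableEq α]
    (D : ι → Finset α)
    (hHall : ∀ J : Finset ι, 2 * J.card ≤ (J.biUnion D).card) :
    ∃ T : ι → Finset α,
      (∀ i, T i ⊆ D i ∧ (T i).card = 2) ∧
      (∀ i j, i ≠ j → Disjoint (T i) (T j)) :=
  stmt_7_general D hHall
end

section
/- If a connected spanning submultigraph H of 2*G (the multigraph obtained from G by doubling each edge) has every vertex of degree 2 or 4, then G has a 2-walk. -/
/-- A multigraph on `V`: `m u v` is the number of parallel edges between `u`
and `v`. -/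
structure Multigraph (V : Type*) where
  m : V → V → ℕ
  symm : ∀ u v, m u v = m v u
  loopless : ∀ v, m v v = 0

namespace Multigraph

variable {V : Type*}

/-- The underlying simple graph of a multigraph. -/
def toSimple (H : Multigraph V) : SimpleGraph V where
  Adj u v := 0 < H.m u v
  symm := ⟨fun u v h => by have h' : 0 < H.m u v := h; rw [H.symm] at h'; exact h'⟩
  loopless := ⟨fun v h => by have h' : 0 < H.m v v := h; rw [H.loopless v] at h'; exact absurd h' (lt_irrefl 0)⟩

/-- The degree of a vertex, counting parallel edges with multiplicity. -/
def degree [Fintype V] (H : Multigraph V) (v : V) : ℕ := ∑ w, H.m v w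

/-- Union (edge-multiplicity sum) of two multigraphs. -/
def add (H K : Multigraph V) : Multigraph V where
  m u v := H.m u v + K.m u v
  symm := fun u v => by rw [H.symm, K.symm]
  loopless := fun v => by rw [H.loopless, K.loopless]

end Multigraph

/-- `G` has a `k`-walk: a spanning closed walk visiting each vertex at most `k`
times. -/
def HasKWalk {V : Type*} [DecidableEq V] (G : SimpleGraph V) (k : ℕ) : Prop :=
  ∃ (v : V) (w : G.Walk v v), (∀ x : V, x ∈ w.support) ∧
    ∀ x : V, (w.support.tail).count x ≤ k

/-!
An Eulerian circuit of `H`, read as a closed walk in `G`, meets each vertex `x` exactly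
`H.degree x / 2 ∈ {1, 2}` times. Such a circuit is obtained as a longest trail of `H`: it cannot
be prolonged at its start, so all edges at the start vertex are used up; by parity the trail is
then closed, so it can be rotated to start at any of its vertices, and connectivity of `H`
forces it to pass everywhere.
-/

theorem Sym2.sum_ite_mk_eq_mk {V : Type*} [Fintype V] [DecidableEq V] {a c : V} (h : a ≠ c)
    (x : V) :
    ∑ y, (if s(a, c) = s(x, y) then 1 else 0) =
      (if a = x then 1 else 0) + (if c = x then 1 else 0) := by
  by_cases hxa : a = x <;> by_cases hxc : c = x <;> subst_vars <;> simp_all [eq_comm]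

namespace SimpleGraph

variable {V : Type*} {G : SimpleGraph V}

theorem Reachable.mem_of_forall_adj {S : Set V} (hS : ∀ a b, G.Adj a b → a ∈ S → b ∈ S)
    {u x : V} (h : G.Reachable u x) (hu : u ∈ S) : x ∈ S := by
  rw [reachable_iff_reflTransGen] at h
  induction h with
  | refl => exact hu
  | tail _ hab ih => exact hS _ _ hab ih

namespace Walk

variable [Fintype V] [DecidableEq V]

theorem sum_count_edges_add_ite {u v : V} (p : G.Walk u v) (x : V) :
    ∑ y, p.edges.count s(x, y) + (if u = x then 1 else 0) + (if v = x then 1 else 0) =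
      2 * p.support.count x := by
  induction p with
  | nil =>
    simp only [edges_nil, List.count_nil, Finset.sum_const_zero, support_nil,
      List.count_singleton, beq_iff_eq]
    omega
  | cons h p ih =>
    simp only [edges_cons, support_cons, List.count_cons, beq_iff_eq, Finset.sum_add_distrib,
      Sym2.sum_ite_mk_eq_mk h.ne]
    omega

theorem sum_count_edges_of_closed {u : V} (p : G.Walk u u) (x : V) :
    ∑ y, p.edges.count s(x, y) = 2 * p.support.tail.count x := by
  have h := p.sum_count_edges_add_ite x
  rw [← p.cons_tail_support] at h
  simp only [List.count_cons, beq_iff_eq] at h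
  omega

theorem odd_sum_count_edges_start {u v : V} (p : G.Walk u v) (huv : u ≠ v) :
    Odd (∑ y, p.edges.count s(u, y)) := by
  have h := p.sum_count_edges_add_ite u
  rw [if_pos rfl, if_neg huv.symm] at h
  exact ⟨p.support.count u - 1, by omega⟩

end Walk

end SimpleGraph

namespace Multigraph

open SimpleGraph

variable {V : Type*} (H : Multigraph V)

def mult : Sym2 V → ℕ := Sym2.lift ⟨H.m, H.symm⟩

@[simp]
theorem mult_mk (a b : V) : H.mult s(a, b) = H.m a b := rfl

variable {G : SimpleGraph V} [DecidableEq V]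

/-- A trail of `H`, recorded as a walk of `G` that uses each edge `e` at most `H.mult e` times. -/
def IsTrail {u v : V} (p : G.Walk u v) : Prop := ∀ e, p.edges.count e ≤ H.mult e

def IsLongestTrail {u v : V} (p : G.Walk u v) : Prop :=
  H.IsTrail p ∧ ∀ (u' v' : V) (q : G.Walk u' v'), H.IsTrail q → q.length ≤ p.length

variable {H}

theorem IsTrail.cons {u v w : V} {p : G.Walk v w} (hp : H.IsTrail p) (h : G.Adj u v)
    (hlt : p.edges.count s(u, v) < H.m u v) : H.IsTrail (.cons h p) := by
  intro e
  simp only [Walk.edges_cons, List.count_cons, beq_iff_eq]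
  split_ifs with he
  · subst he
    simpa using hlt
  · simpa using hp e

theorem IsTrail.length_le [Fintype V] {u v : V} {p : G.Walk u v} (hp : H.IsTrail p) :
    p.length ≤ ∑ e, H.mult e :=
  calc p.length = ∑ e, p.edges.count e := by
        rw [← p.length_edges, ← Multiset.coe_card, ← Multiset.sum_count_eq_card
          (fun _ _ => Finset.mem_univ _)]
        simp only [Multiset.coe_count]
    _ ≤ ∑ e, H.mult e := Finset.sum_le_sum fun e _ => hp e

theorem exists_isLongestTrail [Fintype V] [Nonempty V] :
    ∃ (u v : V) (p : G.Walk u v), H.IsLongestTrail p := by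
  set S := {n | ∃ (u v : V) (p : G.Walk u v), H.IsTrail p ∧ p.length = n}
  have hne : S.Nonempty := ⟨0, Classical.arbitrary V, _, .nil, fun e => by simp, rfl⟩
  have hbdd : BddAbove S := ⟨∑ e, H.mult e, by rintro _ ⟨u, v, p, hp, rfl⟩; exact hp.length_le⟩
  obtain ⟨u, v, p, hp, hlen⟩ := Nat.sSup_mem hne hbdd
  exact ⟨u, v, p, hp, fun u' v' q hq => hlen ▸ le_csSup hbdd ⟨u', v', q, hq, rfl⟩⟩

variable (hG : ∀ a b, 0 < H.m a b → G.Adj a b)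
include hG

theorem IsLongestTrail.count_edges_start {u v : V} {p : G.Walk u v} (hp : H.IsLongestTrail p)
    (y : V) : p.edges.count s(u, y) = H.m u y := by
  refine le_antisymm (hp.1 s(u, y)) (not_lt.1 fun hlt => ?_)
  have hyu : G.Adj y u := (hG u y (by omega)).symm
  have := hp.2 _ _ _ (hp.1.cons hyu (by rwa [Sym2.eq_swap, H.symm]))
  simp at this

theorem IsLongestTrail.count_edges_of_mem_support {u x : V} {p : G.Walk u u}
    (hp : H.IsLongestTrail p) (hx : x ∈ p.support) (y : V) : p.edges.count s(x, y) = H.m x y := by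
  have hrot (e : Sym2 V) : (p.rotate x hx).edges.count e = p.edges.count e :=
    (p.rotate_edges x hx).perm.count_eq e
  have hp' : H.IsLongestTrail (p.rotate x hx) := ⟨fun e => hrot e ▸ hp.1 e, by simpa using hp.2⟩
  rw [← hrot]
  exact hp'.count_edges_start hG y

theorem IsLongestTrail.eq_of_even_degree [Fintype V] (heven : ∀ x, Even (H.degree x)) {u v : V}
    {p : G.Walk u v} (hp : H.IsLongestTrail p) : u = v := by
  by_contra huv
  have h := p.odd_sum_count_edges_start huv
  simp only [hp.count_edges_start hG] at h
  exact Nat.not_odd_iff_even.2 (heven u) h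

theorem exists_eulerian_walk [Fintype V] (hconn : H.toSimple.Connected)
    (heven : ∀ x, Even (H.degree x)) :
    ∃ (u : V) (p : G.Walk u u), ∀ a b, p.edges.count s(a, b) = H.m a b := by
  have := hconn.nonempty
  obtain ⟨u, v, p, hp⟩ := exists_isLongestTrail (H := H) (G := G)
  obtain rfl := hp.eq_of_even_degree hG heven
  refine ⟨u, p, fun a b => hp.count_edges_of_mem_support hG ?_ b⟩
  refine (hconn.preconnected u a).mem_of_forall_adj (S := {x | x ∈ p.support})
    (fun x y hxy hx => ?_) p.start_mem_support
  have hxy : 0 < p.edges.count s(x, y) := by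
    rw [hp.count_edges_of_mem_support hG hx]
    exact hxy
  exact p.snd_mem_support_of_mem_edges (List.count_pos_iff.1 hxy)

end Multigraph

/-- If a connected spanning submultigraph `H` of `2*G` has all vertex degrees
equal to 2 or 4, then `G` has a 2-walk. -/
theorem stmt_11 {V : Type*} [Fintype V] [DecidableEq V] (G : SimpleGraph V)
    (H : Multigraph V)
    (hsub : ∀ u v, H.m u v ≤ 2 ∧ (0 < H.m u v → G.Adj u v))
    (hconn : H.toSimple.Connected)
    (hdeg : ∀ v, H.degree v = 2 ∨ H.degree v = 4) :
    HasKWalk G 2 := by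
  obtain ⟨u, p, hp⟩ := H.exists_eulerian_walk (fun a b => (hsub a b).2) hconn fun x => by
    rcases hdeg x with h | h <;> rw [h] <;> decide
  have hcount (x : V) : 2 * p.support.tail.count x = H.degree x := by
    rw [← p.sum_count_edges_of_closed]
    exact Finset.sum_congr rfl fun y _ => hp x y
  refine ⟨u, p, fun x => ?_, fun x => ?_⟩
  · have hpos : 0 < p.support.tail.count x := by
      have := hcount x
      rcases hdeg x with h | h <;> omega
    exact List.mem_of_mem_tail (List.count_pos_iff.1 hpos)
  · have := hcount x
    rcases hdeg x with h | h <;> omega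
end

section
/- If a graph G has a k-walk, then G is 1/k-tough. -/
/-!
Orient the `k`-walk. If `G - S` has a component `C` and some vertex outside `C`, the walk
must leave `C` at some step, and since `C` is a component of `G - S` that step ends in `S`.
Choosing such a dart for every component gives distinct darts (their tails lie in distinct
components), and the distinct darts of the walk ending at `s` number at most the visits to
`s`, hence at most `k`. So `G - S` has at most `k * |S|` components.
-/

open Finset

theorem List.card_toFinset_filter_le_count_map {α β : Type*} [DecidableEq α]
    [DecidableEq β] (l : List α) (f : α → β) (b : β) :
    #{a ∈ l.toFinset | f a = b} ≤ (l.map f).count b := by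
  rw [List.count_eq_countP, List.countP_map, List.countP_eq_length_filter]
  convert (l.filter _).toFinset_card_le
  rw [List.toFinset_filter]
  simp

namespace SimpleGraph

variable {V : Type*} {G : SimpleGraph V}

namespace Walk

theorem exists_boundary_dart_of_closed {v x y : V} (w : G.Walk v v)
    (A : Set V) (hx : x ∈ w.support) (hxA : x ∈ A) (hy : y ∈ w.support) (hyA : y ∉ A) :
    ∃ d ∈ w.darts, d.fst ∈ A ∧ d.snd ∉ A := by
  classical
  by_cases hv : v ∈ A
  · obtain ⟨d, hd, hdA⟩ := (w.takeUntil y hy).exists_boundary_dart A hv hyA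
    exact ⟨d, w.darts_takeUntil_subset_darts hy hd, hdA⟩
  · obtain ⟨d, hd, hdA⟩ := (w.dropUntil x hx).exists_boundary_dart A hxA hv
    exact ⟨d, w.darts_dropUntil_subset_darts hx hd, hdA⟩

theorem card_darts_filter_snd_mem_le [DecidableEq V] {u v : V} {k : ℕ} (w : G.Walk u v)
    (hk : ∀ x, w.support.tail.count x ≤ k) (S : Finset V) :
    #{d ∈ w.darts.toFinset | d.snd ∈ S} ≤ k * #S := by
  refine card_le_mul_card_image_of_maps_to (f := fun d : G.Dart => d.snd)
    (fun d hd => (mem_filter.mp hd).2) _ fun s _ => ?_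
  calc #{d ∈ {d ∈ w.darts.toFinset | d.snd ∈ S} | d.snd = s}
      ≤ #{d ∈ w.darts.toFinset | d.snd = s} :=
        card_le_card (filter_subset_filter _ (filter_subset _ _))
    _ ≤ (w.darts.map (·.snd)).count s := w.darts.card_toFinset_filter_le_count_map _ s
    _ = w.support.tail.count s := by rw [map_snd_darts]
    _ ≤ k := hk s

end Walk

theorem ConnectedComponent.exists_dart_snd_mem {S : Set V} {v : V}
    (w : G.Walk v v) (hw : ∀ x, x ∈ w.support) [Nontrivial (G.induce Sᶜ).ConnectedComponent]
    (C : (G.induce Sᶜ).ConnectedComponent) :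
    ∃ d ∈ w.darts, d.fst ∈ Subtype.val '' C.supp ∧ d.snd ∈ S := by
  obtain ⟨c, hc⟩ := C.exists_rep
  obtain ⟨D, hD⟩ := exists_ne C
  obtain ⟨x, rfl⟩ := D.exists_rep
  have hxC : x.val ∉ Subtype.val '' C.supp := by
    rintro ⟨y, hy, hyx⟩
    rw [Subtype.val_injective hyx, mem_supp_iff] at hy
    exact hD hy
  obtain ⟨d, hd, hfst, hsnd⟩ :=
    w.exists_boundary_dart_of_closed (Subtype.val '' C.supp) (hw c) ⟨c, hc, rfl⟩ (hw x) hxC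
  refine ⟨d, hd, hfst, ?_⟩
  by_contra hdS
  obtain ⟨y, hy, hyd⟩ := hfst
  refine hsnd ⟨(⟨d.snd, hdS⟩ : ↥Sᶜ), ?_, rfl⟩
  rw [mem_supp_iff, ← hy]
  have hadj : (G.induce Sᶜ).Adj y ⟨d.snd, hdS⟩ := show G.Adj y d.snd from hyd ▸ d.adj
  exact ConnectedComponent.sound hadj.reachable.symm

end SimpleGraph

open SimpleGraph

/-- If a graph has a `k`-walk then it is `1/k`-tough. -/
theorem stmt_14 {V : Type*} [Fintype V] [DecidableEq V] (G : SimpleGraph V)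
    (k : ℕ) (hk : 0 < k) (h : HasKWalk G k) : Tough G (1 / (k : ℝ)) := by
  classical
  intro S hS
  obtain ⟨v, w, hw, hcount⟩ := h
  have : Nontrivial (G.induce Sᶜ).ConnectedComponent := Finite.one_lt_card_iff_nontrivial.mp hS
  choose d hd hfst hsnd using ConnectedComponent.exists_dart_snd_mem (S := S) w hw
  have hd_inj : Function.Injective d := fun C D hCD => by
    obtain ⟨x, hx, hxC⟩ := hfst C
    obtain ⟨y, hy, hyD⟩ := hfst D
    rw [hCD, ← hyD] at hxC
    rw [← (C.mem_supp_iff x).mp hx, ← (D.mem_supp_iff y).mp hy, Subtype.val_injective hxC]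
  have hcomponents : Nat.card (G.induce Sᶜ).ConnectedComponent ≤ k * Nat.card S := by
    set T := {e ∈ w.darts.toFinset | e.snd ∈ S.toFinset}
    have hT : ∀ C, d C ∈ T := fun C => by simp [T, hd C, hsnd C]
    calc Nat.card (G.induce Sᶜ).ConnectedComponent
        ≤ Nat.card T := Nat.card_le_card_of_injective (fun C => ⟨d C, hT C⟩)
          fun C D hCD => hd_inj (congrArg Subtype.val hCD)
      _ = #T := Nat.card_eq_finsetCard T
      _ ≤ k * #S.toFinset := w.card_darts_filter_snd_mem_le hcount _
      _ = k * Nat.card S := by rw [Nat.card_eq_card_toFinset]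
  rw [one_div, inv_mul_le_iff₀ (by exact_mod_cast hk)]
  exact_mod_cast hcomponents
end
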